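/- arXiv:2505.23176 — 2 statements merged into one kernel-verified Lean document; each statement's English description precedes it below -/
import Mathlib

section
/- Let m, n, r, N be positive integers, let η, G, Γ_u, Γ_v ≥ 0 be reals, and let e ≤ E be natural numbers. For each τ ∈ {1,…,e} and each j ∈ {1,…,N}, let F_{j,τ} be a real m×n matrix with ‖F_{j,τ}‖_F² ≤ G², U_{j,τ} a real m×r matrix with ‖U_{j,τ}‖_F² ≤ Γ_u², and V_{j,τ} a real n×r matrix with ‖V_{j,τ}‖_F² ≤ Γ_v². Then for every i ∈ {1,…,N}: ‖η·∑_{τ=1}^{e} ((1/N)·∑_{j=1}^{N} F_{j,τ}·V_{j,τ} − F_{i,τ}·V_{i,τ})‖_F² + ‖η·∑_{τ=1}^{e} ((1/N)·∑_{j=1}^{N} F_{j,τ}ᵀ·U_{j,τ} − F_{i,τ}ᵀ·U_{i,τ})‖_F² ≤ 4η²·E²·G²·(Γ_u² + Γ_v²). -/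
open Matrix BigOperators

attribute [local instance] Matrix.frobeniusSeminormedAddCommGroup Matrix.frobeniusNormedSpace

/-- Squared Frobenius norm of a real matrix. -/
noncomputable def frobSq {m n : ℕ} (A : Matrix (Fin m) (Fin n) ℝ) : ℝ :=
  ∑ i, ∑ j, (A i j) ^ 2

lemma frobSq_eq_sq_norm {m n : ℕ} (A : Matrix (Fin m) (Fin n) ℝ) :
    frobSq A = ‖A‖ ^ 2 := by
  have h1 : (0:ℝ) ≤ ∑ i, ∑ j, ‖A i j‖ ^ (2:ℝ) := by positivity
  rw [Matrix.frobenius_norm_def, ← Real.rpow_natCast _ 2, ← Real.rpow_mul h1]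
  norm_num [frobSq, Real.rpow_two, Real.norm_eq_abs, sq_abs]

lemma norm_le_of_frobSq {m n : ℕ} {A : Matrix (Fin m) (Fin n) ℝ} {c : ℝ}
    (hc : 0 ≤ c) (h : frobSq A ≤ c ^ 2) : ‖A‖ ≤ c := by
  rw [frobSq_eq_sq_norm] at h
  nlinarith [norm_nonneg A]


lemma avg_dev_bound {p q N e : ℕ} (hN : 0 < N) (η c : ℝ) (hη : 0 ≤ η) (hc : 0 ≤ c)
    (E : ℕ) (heE : e ≤ E)
    (M : Fin e → Fin N → Matrix (Fin p) (Fin q) ℝ) (hM : ∀ τ j, ‖M τ j‖ ≤ c) (i : Fin N) :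
    ‖η • ∑ τ, ((1 / (N : ℝ)) • ∑ j, M τ j - M τ i)‖ ≤ η * E * (2 * c) := by
  have h1 : ∀ τ : Fin e, ‖(1 / (N : ℝ)) • ∑ j, M τ j - M τ i‖ ≤ 2 * c := by
    intro τ
    have hs : ‖(1 / (N : ℝ)) • ∑ j, M τ j‖ ≤ c := by
      rw [norm_smul, Real.norm_eq_abs, abs_of_nonneg (by positivity)]
      have := (norm_sum_le Finset.univ (fun j => M τ j)).trans
        (Finset.sum_le_sum (fun j _ => hM τ j))
      simp only [Finset.sum_const, Finset.card_univ, Fintype.card_fin, nsmul_eq_mul] at this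
      have hN' : (0:ℝ) < N := by exact_mod_cast hN
      calc 1 / (N:ℝ) * ‖∑ j, M τ j‖ ≤ 1 / (N:ℝ) * ((N:ℝ) * c) := by
            apply mul_le_mul_of_nonneg_left this (by positivity)
        _ = c := by field_simp
    calc ‖(1 / (N : ℝ)) • ∑ j, M τ j - M τ i‖
        ≤ ‖(1 / (N : ℝ)) • ∑ j, M τ j‖ + ‖M τ i‖ := norm_sub_le _ _
      _ ≤ c + c := add_le_add hs (hM τ i)
      _ = 2 * c := by ring
  rw [norm_smul, Real.norm_eq_abs, abs_of_nonneg hη, mul_assoc]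
  apply mul_le_mul_of_nonneg_left _ hη
  calc ‖∑ τ, ((1 / (N : ℝ)) • ∑ j, M τ j - M τ i)‖
      ≤ ∑ τ : Fin e, (2 * c) := (norm_sum_le _ _).trans (Finset.sum_le_sum fun τ _ => h1 τ)
    _ = (e : ℝ) * (2 * c) := by simp [Finset.sum_const, mul_comm]
    _ ≤ (E : ℝ) * (2 * c) := by
        apply mul_le_mul_of_nonneg_right _ (by positivity)
        exact_mod_cast heE

/-- Deterministic content of Lemma 3: between two consecutive aggregations (at most E
local steps of stepsize η), the deviation of client i's low-rank parameters from the
average parameters is bounded by 4η²E²G²(Γ_u² + Γ_v²). -/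
theorem client_drift_bound {m n r N : ℕ}
    (hm : 0 < m) (hn : 0 < n) (hr : 0 < r) (hN : 0 < N)
    (η G Γu Γv : ℝ) (hη : 0 ≤ η) (hG : 0 ≤ G) (hΓu : 0 ≤ Γu) (hΓv : 0 ≤ Γv)
    (e E : ℕ) (heE : e ≤ E)
    (F : Fin e → Fin N → Matrix (Fin m) (Fin n) ℝ)
    (U : Fin e → Fin N → Matrix (Fin m) (Fin r) ℝ)
    (V : Fin e → Fin N → Matrix (Fin n) (Fin r) ℝ)
    (hF : ∀ τ j, frobSq (F τ j) ≤ G ^ 2)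
    (hU : ∀ τ j, frobSq (U τ j) ≤ Γu ^ 2)
    (hV : ∀ τ j, frobSq (V τ j) ≤ Γv ^ 2) :
    ∀ i : Fin N,
      frobSq (η • ∑ τ, ((1 / (N : ℝ)) • ∑ j, F τ j * V τ j - F τ i * V τ i)) +
      frobSq (η • ∑ τ, ((1 / (N : ℝ)) • ∑ j, (F τ j)ᵀ * U τ j - (F τ i)ᵀ * U τ i)) ≤
        4 * η ^ 2 * (E : ℝ) ^ 2 * G ^ 2 * (Γu ^ 2 + Γv ^ 2) := by
  intro i
  have hFn : ∀ τ j, ‖F τ j‖ ≤ G := fun τ j => norm_le_of_frobSq hG (hF τ j)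
  have hUn : ∀ τ j, ‖U τ j‖ ≤ Γu := fun τ j => norm_le_of_frobSq hΓu (hU τ j)
  have hVn : ∀ τ j, ‖V τ j‖ ≤ Γv := fun τ j => norm_le_of_frobSq hΓv (hV τ j)
  have hMV : ∀ (τ : Fin e) (j : Fin N), ‖F τ j * V τ j‖ ≤ G * Γv := fun τ j =>
    (Matrix.frobenius_norm_mul _ _).trans
      (mul_le_mul (hFn τ j) (hVn τ j) (norm_nonneg _) hG)
  have hMU : ∀ (τ : Fin e) (j : Fin N), ‖(F τ j)ᵀ * U τ j‖ ≤ G * Γu := fun τ j =>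
    (Matrix.frobenius_norm_mul _ _).trans
      (mul_le_mul ((Matrix.frobenius_norm_transpose _).le.trans (hFn τ j)) (hUn τ j)
        (norm_nonneg _) hG)
  have b1 := avg_dev_bound hN η (G * Γv) hη (by positivity) E heE
    (fun τ j => F τ j * V τ j) hMV i
  have b2 := avg_dev_bound hN η (G * Γu) hη (by positivity) E heE
    (fun τ j => (F τ j)ᵀ * U τ j) hMU i
  rw [frobSq_eq_sq_norm, frobSq_eq_sq_norm]
  have s1 := pow_le_pow_left₀ (norm_nonneg _) b1 2
  have s2 := pow_le_pow_left₀ (norm_nonneg _) b2 2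
  nlinarith [s1, s2]
end

section
/- Let m, n, r be positive integers, let A be a real m×n matrix, U a real m×r matrix, V a real n×r matrix, B a real m×r matrix, and C a real n×r matrix, and let ψ be a real number such that λ_min(U·Uᵀ) + λ_min(V·Vᵀ) ≥ ψ². Then, with ⟨X,Y⟩_F = trace(Xᵀ·Y) the Frobenius inner product: −⟨A·V, B⟩_F − ⟨Aᵀ·U, C⟩_F ≤ −(ψ²/2)·‖A‖_F² + (1/2)·‖A·V − B‖_F² + (1/2)·‖Aᵀ·U − C‖_F². -/
open Matrix BigOperators

/-- Frobenius inner product ⟨X,Y⟩_F = trace(Xᵀ·Y) of real matrices. -/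
noncomputable def frobInner {m n : ℕ} (X Y : Matrix (Fin m) (Fin n) ℝ) : ℝ :=
  Matrix.trace (Xᵀ * Y)

/-!
Row by row, `‖A V‖_F² = ∑ᵢ aᵢᵀ (V Vᵀ) aᵢ ≥ λ_min(V Vᵀ) ‖A‖_F²`, and likewise column by column
`‖Aᵀ U‖_F² ≥ λ_min(U Uᵀ) ‖A‖_F²`, so `‖A V‖_F² + ‖Aᵀ U‖_F² ≥ ψ² ‖A‖_F²`. Expanding
`‖A V - B‖_F²` and `‖Aᵀ U - C‖_F²` by polarization, the claim reduces to this bound together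
with `‖B‖_F², ‖C‖_F² ≥ 0`.
-/

section Spectrum

open scoped ComplexOrder

variable {ι 𝕜 : Type*} [Fintype ι] [DecidableEq ι] [RCLike 𝕜]

lemma Matrix.IsHermitian.posSemidef_sub_smul_one {M : Matrix ι ι 𝕜} (hM : M.IsHermitian)
    {c : ℝ} (hc : ∀ i, c ≤ hM.eigenvalues i) : (M - (c : 𝕜) • 1).PosSemidef := by
  have hdiag : M - (c : 𝕜) • 1 = Unitary.conjStarAlgAut 𝕜 _ hM.eigenvectorUnitary
      (diagonal fun i => ((hM.eigenvalues i - c : ℝ) : 𝕜)) := by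
    conv_lhs => rw [hM.spectral_theorem]
    rw [← map_one (Unitary.conjStarAlgAut 𝕜 _ hM.eigenvectorUnitary), ← map_smul, ← map_sub,
      smul_one_eq_diagonal, diagonal_sub]
    simp
  rw [hdiag, Unitary.conjStarAlgAut_apply,
    Unitary.isUnit_coe.posSemidef_star_right_conjugate_iff, posSemidef_diagonal_iff]
  intro i
  simpa using hc i

lemma Matrix.IsHermitian.iInf_eigenvalues_mul_dotProduct_self_le {M : Matrix ι ι ℝ}
    (hM : M.IsHermitian) (x : ι → ℝ) : (⨅ i, hM.eigenvalues i) * (x ⬝ᵥ x) ≤ x ⬝ᵥ (M *ᵥ x) := by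
  have hpsd := (hM.posSemidef_sub_smul_one fun i => ciInf_le (Finite.bddBelow_range _) i)
    |>.dotProduct_mulVec_nonneg x
  simpa [sub_mulVec, smul_mulVec, dotProduct_sub, dotProduct_smul] using hpsd

end Spectrum

section Frobenius

variable {m n r : ℕ}

lemma frobSq_nonneg (A : Matrix (Fin m) (Fin n) ℝ) : 0 ≤ frobSq A := by
  unfold frobSq
  positivity

lemma frobSq_transpose (A : Matrix (Fin m) (Fin n) ℝ) : frobSq Aᵀ = frobSq A :=
  Finset.sum_comm

lemma frobSq_eq_sum_dotProduct (A : Matrix (Fin m) (Fin n) ℝ) :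
    frobSq A = ∑ i, A i ⬝ᵥ A i := by
  simp [frobSq, dotProduct, sq]

lemma frobSq_eq_frobInner_self (X : Matrix (Fin m) (Fin n) ℝ) : frobSq X = frobInner X X := by
  simp only [frobSq, frobInner, trace, diag, mul_apply, transpose_apply, sq]
  exact Finset.sum_comm

lemma frobInner_comm (X Y : Matrix (Fin m) (Fin n) ℝ) : frobInner X Y = frobInner Y X := by
  rw [frobInner, frobInner, ← trace_transpose, transpose_mul, transpose_transpose]

lemma frobInner_sub_left (X Y Z : Matrix (Fin m) (Fin n) ℝ) :
    frobInner (X - Y) Z = frobInner X Z - frobInner Y Z := by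
  rw [frobInner, transpose_sub, Matrix.sub_mul, trace_sub, frobInner, frobInner]

lemma frobInner_sub_right (X Y Z : Matrix (Fin m) (Fin n) ℝ) :
    frobInner X (Y - Z) = frobInner X Y - frobInner X Z := by
  rw [frobInner, Matrix.mul_sub, trace_sub, frobInner, frobInner]

lemma frobSq_sub (X Y : Matrix (Fin m) (Fin n) ℝ) :
    frobSq (X - Y) = frobSq X - 2 * frobInner X Y + frobSq Y := by
  rw [frobSq_eq_frobInner_self, frobSq_eq_frobInner_self, frobSq_eq_frobInner_self,
    frobInner_sub_left, frobInner_sub_right, frobInner_sub_right, frobInner_comm Y X]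
  ring

lemma frobSq_mul_eq_sum_dotProduct_mulVec (A : Matrix (Fin m) (Fin n) ℝ)
    (V : Matrix (Fin n) (Fin r) ℝ) : frobSq (A * V) = ∑ i, A i ⬝ᵥ ((V * Vᵀ) *ᵥ A i) := by
  rw [frobSq_eq_sum_dotProduct]
  refine Finset.sum_congr rfl fun i _ => ?_
  rw [← mulVec_mulVec, dotProduct_mulVec, mulVec_transpose]
  rfl

lemma iInf_eigenvalues_mul_frobSq_le (A : Matrix (Fin m) (Fin n) ℝ)
    (V : Matrix (Fin n) (Fin r) ℝ) (hV : (V * Vᵀ).IsHermitian) :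
    (⨅ j, hV.eigenvalues j) * frobSq A ≤ frobSq (A * V) := by
  rw [frobSq_mul_eq_sum_dotProduct_mulVec, frobSq_eq_sum_dotProduct, Finset.mul_sum]
  exact Finset.sum_le_sum fun i _ => hV.iInf_eigenvalues_mul_dotProduct_self_le (A i)

lemma mul_frobSq_le_frobSq_mul_add_frobSq_transpose_mul (A : Matrix (Fin m) (Fin n) ℝ)
    (U : Matrix (Fin m) (Fin r) ℝ) (V : Matrix (Fin n) (Fin r) ℝ)
    (hU : (U * Uᵀ).IsHermitian) (hV : (V * Vᵀ).IsHermitian) {c : ℝ}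
    (hc : c ≤ (⨅ i, hU.eigenvalues i) + (⨅ j, hV.eigenvalues j)) :
    c * frobSq A ≤ frobSq (A * V) + frobSq (Aᵀ * U) := by
  have hV_bound := iInf_eigenvalues_mul_frobSq_le A V hV
  have hU_bound := iInf_eigenvalues_mul_frobSq_le Aᵀ U hU
  rw [frobSq_transpose] at hU_bound
  calc c * frobSq A
      ≤ ((⨅ i, hU.eigenvalues i) + (⨅ j, hV.eigenvalues j)) * frobSq A :=
        mul_le_mul_of_nonneg_right hc (frobSq_nonneg A)
    _ ≤ frobSq (A * V) + frobSq (Aᵀ * U) := by linarith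

end Frobenius

theorem descent_inner_product_bound_general {m n r : ℕ}
    (A : Matrix (Fin m) (Fin n) ℝ)
    (U : Matrix (Fin m) (Fin r) ℝ) (V : Matrix (Fin n) (Fin r) ℝ)
    (B : Matrix (Fin m) (Fin r) ℝ) (C : Matrix (Fin n) (Fin r) ℝ)
    (hU : (U * Uᵀ).IsHermitian) (hV : (V * Vᵀ).IsHermitian)
    (ψ : ℝ) (hψ : ψ ^ 2 ≤ (⨅ i, hU.eigenvalues i) + (⨅ j, hV.eigenvalues j)) :
    -frobInner (A * V) B - frobInner (Aᵀ * U) C ≤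
      -(ψ ^ 2 / 2) * frobSq A + (1 / 2) * frobSq (A * V - B) +
        (1 / 2) * frobSq (Aᵀ * U - C) := by
  have hψA := mul_frobSq_le_frobSq_mul_add_frobSq_transpose_mul A U V hU hV hψ
  rw [frobSq_sub, frobSq_sub]
  linarith [frobSq_nonneg B, frobSq_nonneg C]

/-- Key deterministic step of Lemma 6: combining the polarization identity with the
Lemma 1 lower bound λ_min(U·Uᵀ) + λ_min(V·Vᵀ) ≥ ψ². -/
theorem descent_inner_product_bound {m n r : ℕ}
    (hm : 0 < m) (hn : 0 < n) (hr : 0 < r)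
    (A : Matrix (Fin m) (Fin n) ℝ)
    (U : Matrix (Fin m) (Fin r) ℝ) (V : Matrix (Fin n) (Fin r) ℝ)
    (B : Matrix (Fin m) (Fin r) ℝ) (C : Matrix (Fin n) (Fin r) ℝ)
    (hU : (U * Uᵀ).IsHermitian) (hV : (V * Vᵀ).IsHermitian)
    (ψ : ℝ) (hψ : ψ ^ 2 ≤ (⨅ i, hU.eigenvalues i) + (⨅ j, hV.eigenvalues j)) :
    -frobInner (A * V) B - frobInner (Aᵀ * U) C ≤
      -(ψ ^ 2 / 2) * frobSq A + (1 / 2) * frobSq (A * V - B) +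
        (1 / 2) * frobSq (Aᵀ * U - C) :=
  descent_inner_product_bound_general A U V B C hU hV ψ hψ
end
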